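/- Let H be a finite-dimensional complex inner product space, b₀, b₁ unit vectors with |⟨b₀, b₁⟩| = cos α, and b₀', b₁' unit vectors of the form b₀' = cos β₀ · b₀ + sin β₀ · b₀^⊥ and b₁' = cos β₁ · b₁ + sin β₁ · b₁^⊥, where b₀^⊥ ⊥ b₀ and b₁^⊥ ⊥ b₁ are unit vectors, α, β₀, β₁ ∈ [0, π/2], and α + β₀ + β₁ < π/2. Then |⟨b₀', b₁'⟩| ≥ cos(α + β₀ + β₁). -/

import Mathlib

open Real

/-!
Rotating a unit vector `u` by `β` towards a unit vector `p ⊥ u` changes its overlap with a unit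
vector `v` from `cos δ = |⟨u, v⟩|` to at least `cos β cos δ - sin β |⟨p, v⟩|`, and Bessel's
inequality for the orthonormal pair `u, p` gives `|⟨p, v⟩| ≤ sin δ`, so the overlap is at least
`cos (δ + β)`. Applying this to the rotation of `b₀` (against `b₁`) and then to the rotation of
`b₁` (against `b₀'`) adds up the angles.
-/

theorem cos_add_le_cos_mul_sub_sin_mul {α β c s : ℝ} (hc : 0 ≤ c)
    (hcs : c ^ 2 + s ^ 2 ≤ 1) (hαc : cos α ≤ c) (hα : 0 ≤ α) (hβ : 0 ≤ β)
    (hβ' : β ≤ π / 2) (hαβ : α + β ≤ π) :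
    cos (α + β) ≤ cos β * c - sin β * s := by
  have hc1 : c ≤ 1 := by nlinarith
  have harccos_le : arccos c ≤ α := by
    calc arccos c ≤ arccos (cos α) := arccos_le_arccos hαc
      _ = α := arccos_cos hα (by linarith)
  have hs_le : s ≤ sin (arccos c) := by
    rw [sin_arccos]
    exact le_sqrt_of_sq_le (by linarith)
  calc cos (α + β) ≤ cos (arccos c + β) :=
        cos_le_cos_of_nonneg_of_le_pi (by linarith [arccos_nonneg c]) hαβ (by linarith)
    _ = cos β * c - sin β * sin (arccos c) := by
        rw [cos_add, cos_arccos (by linarith) hc1]; ring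
    _ ≤ cos β * c - sin β * s := by
        gcongr
        exact sin_nonneg_of_nonneg_of_le_pi hβ (by linarith)

section
variable {𝕜 H : Type*} [RCLike 𝕜] [NormedAddCommGroup H] [InnerProductSpace 𝕜 H]

theorem norm_inner_sq_add_norm_inner_sq_le {u p : H} (hu : ‖u‖ = 1) (hp : ‖p‖ = 1)
    (hpu : inner 𝕜 p u = 0) (v : H) :
    ‖inner 𝕜 u v‖ ^ 2 + ‖inner 𝕜 p v‖ ^ 2 ≤ ‖v‖ ^ 2 := by
  have hup : inner 𝕜 u p = 0 := inner_eq_zero_symm.mp hpu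
  have hon : Orthonormal 𝕜 ![u, p] := by
    rw [orthonormal_iff_ite]
    intro i j
    fin_cases i <;> fin_cases j <;> simp [hup, hpu, inner_self_eq_norm_sq_to_K, hu, hp]
  simpa [Fin.sum_univ_two] using hon.sum_inner_products_le (s := Finset.univ) v

theorem norm_cos_smul_add_sin_smul {u p : H} (hu : ‖u‖ = 1) (hp : ‖p‖ = 1)
    (hpu : inner 𝕜 p u = 0) (β : ℝ) :
    ‖(cos β : 𝕜) • u + (sin β : 𝕜) • p‖ = 1 := by
  have hpyth := norm_add_sq_eq_norm_sq_add_norm_sq_of_inner_eq_zero (𝕜 := 𝕜)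
    ((cos β : 𝕜) • u) ((sin β : 𝕜) • p)
    (by simp [inner_smul_left, inner_smul_right, inner_eq_zero_symm.mp hpu])
  simp only [norm_smul, RCLike.norm_ofReal, hu, hp, mul_one] at hpyth
  have hsq : ‖(cos β : 𝕜) • u + (sin β : 𝕜) • p‖ ^ 2 = 1 := by
    nlinarith [sin_sq_add_cos_sq β, sq_abs (cos β), sq_abs (sin β)]
  exact (pow_eq_one_iff_of_nonneg (norm_nonneg _) two_ne_zero).mp hsq
theorem cos_add_le_norm_inner_cos_smul_add_sin_smul {u p v : H} {α β : ℝ}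
    (hu : ‖u‖ = 1) (hp : ‖p‖ = 1) (hpu : inner 𝕜 p u = 0) (hv : ‖v‖ ≤ 1)
    (hα : 0 ≤ α) (hβ : 0 ≤ β) (hβ' : β ≤ π / 2) (hαβ : α + β ≤ π)
    (hαv : cos α ≤ ‖inner 𝕜 u v‖) :
    cos (α + β) ≤ ‖inner 𝕜 ((cos β : 𝕜) • u + (sin β : 𝕜) • p) v‖ := by
  have hbessel : ‖inner 𝕜 u v‖ ^ 2 + ‖inner 𝕜 p v‖ ^ 2 ≤ 1 := by
    nlinarith [norm_inner_sq_add_norm_inner_sq_le hu hp hpu v, norm_nonneg v]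
  have hexpand : inner 𝕜 ((cos β : 𝕜) • u + (sin β : 𝕜) • p) v
      = (cos β : 𝕜) * inner 𝕜 u v + (sin β : 𝕜) * inner 𝕜 p v := by
    simp [inner_add_left, inner_smul_left]
  have hcos : 0 ≤ cos β := cos_nonneg_of_mem_Icc ⟨by linarith, hβ'⟩
  have hsin : 0 ≤ sin β := sin_nonneg_of_nonneg_of_le_pi hβ (by linarith)
  calc cos (α + β) ≤ cos β * ‖inner 𝕜 u v‖ - sin β * ‖inner 𝕜 p v‖ :=
        cos_add_le_cos_mul_sub_sin_mul (norm_nonneg _) hbessel hαv hα hβ hβ' hαβ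
    _ = ‖(cos β : 𝕜) * inner 𝕜 u v‖ - ‖(sin β : 𝕜) * inner 𝕜 p v‖ := by
        simp only [norm_mul, RCLike.norm_ofReal, abs_of_nonneg hcos, abs_of_nonneg hsin]
    _ ≤ ‖inner 𝕜 ((cos β : 𝕜) • u + (sin β : 𝕜) • p) v‖ := by
        rw [hexpand]; exact norm_sub_le_norm_add _ _

end

theorem stmt_8_general {H : Type*} [NormedAddCommGroup H] [InnerProductSpace ℂ H]
    (α β₀ β₁ : ℝ)
    (hα : 0 ≤ α ∧ α ≤ π / 2) (hβ₀ : 0 ≤ β₀ ∧ β₀ ≤ π / 2) (hβ₁ : 0 ≤ β₁ ∧ β₁ ≤ π / 2)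
    (hsum : α + β₀ + β₁ < π / 2)
    (b₀ b₁ b₀p b₁p b₀' b₁' : H)
    (hb₀ : ‖b₀‖ = 1) (hb₁ : ‖b₁‖ = 1) (hb₀p : ‖b₀p‖ = 1) (hb₁p : ‖b₁p‖ = 1)
    (horth₀ : (inner ℂ b₀p b₀ : ℂ) = 0) (horth₁ : (inner ℂ b₁p b₁ : ℂ) = 0)
    (hov : ‖(inner ℂ b₀ b₁ : ℂ)‖ = Real.cos α)
    (hb₀' : b₀' = ((Real.cos β₀ : ℝ) : ℂ) • b₀ + ((Real.sin β₀ : ℝ) : ℂ) • b₀p)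
    (hb₁' : b₁' = ((Real.cos β₁ : ℝ) : ℂ) • b₁ + ((Real.sin β₁ : ℝ) : ℂ) • b₁p) :
    ‖(inner ℂ b₀' b₁' : ℂ)‖ ≥ Real.cos (α + β₀ + β₁) := by
  have hb₀'_norm : ‖b₀'‖ = 1 := hb₀' ▸ norm_cos_smul_add_sin_smul hb₀ hb₀p horth₀ β₀
  have hπ := pi_pos
  have h₀ : cos (α + β₀) ≤ ‖(inner ℂ b₁ b₀' : ℂ)‖ := by
    rw [norm_inner_symm, hb₀']
    exact cos_add_le_norm_inner_cos_smul_add_sin_smul hb₀ hb₀p horth₀ hb₁.le hα.1 hβ₀.1 hβ₀.2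
      (by linarith) hov.ge
  rw [ge_iff_le, norm_inner_symm, hb₁']
  exact cos_add_le_norm_inner_cos_smul_add_sin_smul hb₁ hb₁p horth₁ hb₀'_norm.le
    (by linarith) hβ₁.1 hβ₁.2 (by linarith) h₀

theorem stmt_8 {H : Type*} [NormedAddCommGroup H] [InnerProductSpace ℂ H]
    [FiniteDimensional ℂ H]
    (α β₀ β₁ : ℝ)
    (hα : 0 ≤ α ∧ α ≤ π / 2) (hβ₀ : 0 ≤ β₀ ∧ β₀ ≤ π / 2) (hβ₁ : 0 ≤ β₁ ∧ β₁ ≤ π / 2)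
    (hsum : α + β₀ + β₁ < π / 2)
    (b₀ b₁ b₀p b₁p b₀' b₁' : H)
    (hb₀ : ‖b₀‖ = 1) (hb₁ : ‖b₁‖ = 1) (hb₀p : ‖b₀p‖ = 1) (hb₁p : ‖b₁p‖ = 1)
    (horth₀ : (inner ℂ b₀p b₀ : ℂ) = 0) (horth₁ : (inner ℂ b₁p b₁ : ℂ) = 0)
    (hov : ‖(inner ℂ b₀ b₁ : ℂ)‖ = Real.cos α)
    (hb₀' : b₀' = ((Real.cos β₀ : ℝ) : ℂ) • b₀ + ((Real.sin β₀ : ℝ) : ℂ) • b₀p)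
    (hb₁' : b₁' = ((Real.cos β₁ : ℝ) : ℂ) • b₁ + ((Real.sin β₁ : ℝ) : ℂ) • b₁p) :
    ‖(inner ℂ b₀' b₁' : ℂ)‖ ≥ Real.cos (α + β₀ + β₁) :=
  stmt_8_general α β₀ β₁ hα hβ₀ hβ₁ hsum b₀ b₁ b₀p b₁p b₀' b₁' hb₀ hb₁ hb₀p hb₁p horth₀ horth₁ hov
    hb₀' hb₁'
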